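/- arXiv:2011.09949 — 3 statements merged into one kernel-verified Lean document; each statement's English description precedes it below -/
import Mathlib

section
/- Let rh, ys, A, B be real numbers with ys > 0, and define u(r) = r² + ys² + A², v(r) = (rh − r)² + ys² + B², f(r) = ys² · (u(r)·v(r))^(−3/2), and the cubic p(r) = 6r³ − 9·rh·r² + 3·(2·ys² + rh² + A² + B²)·r − 3·rh·(ys² + A²). Then for every real r, the derivative of f at r equals 0 if and only if p(r) = 0. -/
open Real

/-- Since `c * g ^ s` has derivative `c * s * g ^ (s - 1) * g'` and `g > 0`, only `g'` can vanish. -/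
theorem deriv_const_mul_rpow_eq_zero_iff {g : ℝ → ℝ} {g' c s x : ℝ} (hg : HasDerivAt g g' x)
    (hpos : 0 < g x) (hc : c ≠ 0) (hs : s ≠ 0) :
    deriv (fun y => c * g y ^ s) x = 0 ↔ g' = 0 := by
  rw [((hg.rpow_const (Or.inl hpos.ne')).const_mul c).deriv]
  have hpow : g x ^ (s - 1) ≠ 0 := (rpow_pos_of_pos hpos _).ne'
  simp [hc, hs, hpow]

theorem hasDerivAt_sq_add_mul_sub_sq_add (a b h x : ℝ) :
    HasDerivAt (fun y => (y ^ 2 + a) * ((h - y) ^ 2 + b))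
      (2 * x * ((h - x) ^ 2 + b) - 2 * (h - x) * (x ^ 2 + a)) x := by
  have hu : HasDerivAt (fun y => y ^ 2 + a) (2 * x) x := by
    simpa using (hasDerivAt_pow 2 x).add_const a
  have hv : HasDerivAt (fun y => (h - y) ^ 2 + b) (-(2 * (h - x))) x := by
    simpa using (((hasDerivAt_id x).const_sub h).pow 2).add_const b
  exact (hu.mul hv).congr_deriv (by ring)

/-- Proposition 4: the derivative of `f(r) = ys² · (u(r)·v(r))^(-3/2)` vanishes
at `r` if and only if the cubic `p(r)` vanishes at `r`. -/
theorem snr_small_ris_critical_iff (rh ys A B : ℝ) (hys : 0 < ys) (r : ℝ) :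
    deriv
      (fun r : ℝ => ys ^ 2 *
        ((r ^ 2 + ys ^ 2 + A ^ 2) * ((rh - r) ^ 2 + ys ^ 2 + B ^ 2)) ^ (-(3 : ℝ) / 2))
      r = 0 ↔
    6 * r ^ 3 - 9 * rh * r ^ 2 + 3 * (2 * ys ^ 2 + rh ^ 2 + A ^ 2 + B ^ 2) * r
      - 3 * rh * (ys ^ 2 + A ^ 2) = 0 := by
  have huv := hasDerivAt_sq_add_mul_sub_sq_add (ys ^ 2 + A ^ 2) (ys ^ 2 + B ^ 2) rh r
  simp only [← add_assoc] at huv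
  refine (deriv_const_mul_rpow_eq_zero_iff huv (by positivity) (by positivity)
    (by norm_num)).trans ?_
  -- the cubic is `3/2` times the derivative of `u * v`
  constructor <;> intro h
  · linear_combination (3 / 2 : ℝ) * h
  · linear_combination (2 / 3 : ℝ) * h
end

section
/- Let rh, ys, A, B be real numbers with rh > 0 and ys > 0, and define u(r) = r² + ys² + A², v(r) = (rh − r)² + ys² + B², f(r) = ys² · (u(r)·v(r))^(−3/2), and the cubic p(r) = 6r³ − 9·rh·r² + 3·(2·ys² + rh² + A² + B²)·r − 3·rh·(ys² + A²). Then f attains a global maximum over ℝ, and every global maximizer r* satisfies 0 < r* < rh and p(r*) = 0. -/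
/-!
The SNR is `ys² · (u v)^(-3/2)` with `u`, `v` the squared TX–RIS and RIS–RX distances, so its
maximizers are exactly the minimizers of the quartic `u v`. This quartic is coercive, hence has a
global minimum, and at any minimizer `r` its derivative `2 (r v - (rh - r) u)` vanishes; the cubic
`p` is `3/2` times that derivative. Since `u, v > 0`, the derivative is negative for `r ≤ 0` and
positive for `r ≥ rh`, which confines the minimizer to `(0, rh)`.
-/

open Real Filter

/-- `r² + a` and `(h - r)² + b` are the squared TX–RIS and RIS–RX distances, with
`a = ys² + A²` and `b = ys² + B²`. -/
def sqDistProd (h a b r : ℝ) : ℝ := (r ^ 2 + a) * ((h - r) ^ 2 + b)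

section sqDistProd

variable {h a b : ℝ}

theorem sqDistProd_pos (ha : 0 < a) (hb : 0 < b) (r : ℝ) : 0 < sqDistProd h a b r := by
  unfold sqDistProd
  positivity

theorem hasDerivAt_sqDistProd (r : ℝ) :
    HasDerivAt (sqDistProd h a b) (2 * (r * ((h - r) ^ 2 + b) - (h - r) * (r ^ 2 + a))) r := by
  have hu : HasDerivAt (fun r : ℝ => r ^ 2 + a) (2 * r) r := by
    simpa using (hasDerivAt_pow 2 r).add_const a
  have hv : HasDerivAt (fun r : ℝ => (h - r) ^ 2 + b) (-(2 * (h - r))) r := by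
    simpa using (((hasDerivAt_id r).const_sub h).pow 2).add_const b
  exact (hu.mul hv).congr_deriv (by ring)

theorem continuous_sqDistProd : Continuous (sqDistProd h a b) := by
  unfold sqDistProd
  fun_prop

theorem tendsto_sqDistProd_cocompact (ha : 0 ≤ a) (hb : 0 < b) :
    Tendsto (sqDistProd h a b) (cocompact ℝ) atTop := by
  have hsq : Tendsto (fun r : ℝ => b * ‖r‖ ^ 2) (cocompact ℝ) atTop :=
    ((tendsto_pow_atTop two_ne_zero).comp tendsto_norm_cocompact_atTop).const_mul_atTop hb
  refine tendsto_atTop_mono (fun r => ?_) hsq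
  rw [norm_eq_abs, sq_abs, sqDistProd]
  nlinarith [sq_nonneg (h - r), sq_nonneg r]

theorem exists_forall_sqDistProd_le (ha : 0 ≤ a) (hb : 0 < b) :
    ∃ x, ∀ y, sqDistProd h a b x ≤ sqDistProd h a b y :=
  continuous_sqDistProd.exists_forall_le (tendsto_sqDistProd_cocompact ha hb)

theorem critical_of_forall_sqDistProd_le {x : ℝ}
    (hx : ∀ y, sqDistProd h a b x ≤ sqDistProd h a b y) :
    x * ((h - x) ^ 2 + b) = (h - x) * (x ^ 2 + a) := by
  have hloc : IsLocalMin (sqDistProd h a b) x := Eventually.of_forall hx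
  have := hloc.hasDerivAt_eq_zero (hasDerivAt_sqDistProd x)
  linarith

theorem mem_Ioo_of_critical (hh : 0 < h) (ha : 0 < a) (hb : 0 < b) {x : ℝ}
    (hcrit : x * ((h - x) ^ 2 + b) = (h - x) * (x ^ 2 + a)) : x ∈ Set.Ioo 0 h := by
  have hu : 0 < x ^ 2 + a := by positivity
  have hv : 0 < (h - x) ^ 2 + b := by positivity
  constructor
  · by_contra! hx0
    nlinarith [mul_nonpos_of_nonpos_of_nonneg hx0 hv.le, mul_pos (by linarith : 0 < h - x) hu]
  · by_contra! hxh
    nlinarith [mul_pos (by linarith : 0 < x) hv,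
      mul_nonpos_of_nonpos_of_nonneg (by linarith : h - x ≤ 0) hu.le]

end sqDistProd

/-- Proposition 4 (optimal placement): `f(r) = ys² · (u(r)·v(r))^(-3/2)` attains a
global maximum over ℝ, and every global maximizer `r*` satisfies `0 < r* < rh`
and is a root of the cubic `p`. -/
theorem snr_small_ris_optimal_placement (rh ys A B : ℝ) (hrh : 0 < rh) (hys : 0 < ys) :
    (∃ rstar : ℝ, ∀ r : ℝ,
      ys ^ 2 * ((r ^ 2 + ys ^ 2 + A ^ 2) * ((rh - r) ^ 2 + ys ^ 2 + B ^ 2)) ^ (-(3 : ℝ) / 2)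
        ≤ ys ^ 2 *
          ((rstar ^ 2 + ys ^ 2 + A ^ 2) * ((rh - rstar) ^ 2 + ys ^ 2 + B ^ 2)) ^ (-(3 : ℝ) / 2)) ∧
    (∀ rstar : ℝ,
      (∀ r : ℝ,
        ys ^ 2 * ((r ^ 2 + ys ^ 2 + A ^ 2) * ((rh - r) ^ 2 + ys ^ 2 + B ^ 2)) ^ (-(3 : ℝ) / 2)
          ≤ ys ^ 2 *
            ((rstar ^ 2 + ys ^ 2 + A ^ 2) * ((rh - rstar) ^ 2 + ys ^ 2 + B ^ 2)) ^ (-(3 : ℝ) / 2)) →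
      0 < rstar ∧ rstar < rh ∧
        6 * rstar ^ 3 - 9 * rh * rstar ^ 2
          + 3 * (2 * ys ^ 2 + rh ^ 2 + A ^ 2 + B ^ 2) * rstar
          - 3 * rh * (ys ^ 2 + A ^ 2) = 0) := by
  have ha : 0 < ys ^ 2 + A ^ 2 := by positivity
  have hb : 0 < ys ^ 2 + B ^ 2 := by positivity
  set g := sqDistProd rh (ys ^ 2 + A ^ 2) (ys ^ 2 + B ^ 2)
  have hg : ∀ r, (r ^ 2 + ys ^ 2 + A ^ 2) * ((rh - r) ^ 2 + ys ^ 2 + B ^ 2) = g r := fun r => by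
    simp only [g, sqDistProd]
    ring
  have hmax_iff : ∀ x y, ys ^ 2 * g x ^ (-(3 : ℝ) / 2) ≤ ys ^ 2 * g y ^ (-(3 : ℝ) / 2) ↔
      g y ≤ g x := fun x y => by
    rw [mul_le_mul_iff_right₀ (by positivity),
      rpow_le_rpow_iff_of_neg (sqDistProd_pos ha hb x) (sqDistProd_pos ha hb y) (by norm_num)]
  simp only [hg, hmax_iff]
  refine ⟨exists_forall_sqDistProd_le ha.le hb, fun rstar hmin => ?_⟩
  have hcrit := critical_of_forall_sqDistProd_le hmin
  obtain ⟨hpos, hlt⟩ := mem_Ioo_of_critical hrh ha hb hcrit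
  exact ⟨hpos, hlt, by linear_combination 3 * hcrit⟩
end

section
/- Let rh, ys, A, B be real numbers with rh > 0 and ys > 0, define u(r) = r² + ys² + A², v(r) = (rh − r)² + ys² + B², g(r) = (u(r)/v(r))^(3/2), and let r* = (−A² + rh² + B² + √((A² − rh² − B²)² + 4·rh²·(ys² + A²))) / (2·rh). Then for every r ≥ 0 with r ≠ r*, g(r) < g(r*); that is, r* is the unique global maximizer of g on [0, ∞). -/
/-!
With `u(r) = r² + a` and `v(r) = (h - r)² + b`, the cross difference `u(t) v(r) - u(r) v(t)`
is a quadratic in `r` with leading coefficient `u(t) - v(t)`. When `t` is a critical point of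
`u / v`, i.e. a root of `h t² - (h² + b - a) t - h a = 0`, it has a double root at `r = t`, so it
equals `(u(t) - v(t)) (r - t)²`. For the larger root `r*` of that quadratic,
`u(r*) - v(r*) = 2 h r* - (h² + b - a)` is the square root of its discriminant, hence positive,
and `u / v` attains its strict maximum at `r*`.
-/

open Real

section Placement

variable {h a b t : ℝ}

theorem cross_sub_eq_of_stationary (ht : h * t ^ 2 - (h ^ 2 + b - a) * t - h * a = 0) (r : ℝ) :
    (t ^ 2 + a) * ((h - r) ^ 2 + b) - (r ^ 2 + a) * ((h - t) ^ 2 + b) =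
      (2 * h * t - (h ^ 2 + b - a)) * (r - t) ^ 2 := by
  linear_combination 2 * (r - t) * ht

theorem div_lt_div_of_stationary (hb : 0 < b)
    (ht : h * t ^ 2 - (h ^ 2 + b - a) * t - h * a = 0) (hlead : 0 < 2 * h * t - (h ^ 2 + b - a))
    {r : ℝ} (hr : r ≠ t) :
    (r ^ 2 + a) / ((h - r) ^ 2 + b) < (t ^ 2 + a) / ((h - t) ^ 2 + b) := by
  rw [div_lt_div_iff₀ (by positivity) (by positivity), ← sub_pos, cross_sub_eq_of_stationary ht]
  exact mul_pos hlead (sq_pos_of_ne_zero (sub_ne_zero.mpr hr))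

theorem stationary_and_pos_of_eq_quadratic_formula {c : ℝ} (hh : 0 < h) (ha : 0 < a)
    (ht : t = (c + √(c ^ 2 + 4 * h ^ 2 * a)) / (2 * h)) :
    h * t ^ 2 - c * t - h * a = 0 ∧ 0 < 2 * h * t - c := by
  have hdisc : 0 < c ^ 2 + 4 * h ^ 2 * a := by positivity
  have hsqrt : 2 * h * t - c = √(c ^ 2 + 4 * h ^ 2 * a) := by
    rw [ht]
    field_simp
    ring
  refine ⟨?_, hsqrt ▸ sqrt_pos.mpr hdisc⟩
  have hsq := congrArg (· ^ 2) hsqrt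
  simp only [sq_sqrt hdisc.le] at hsq
  have : 4 * h * (h * t ^ 2 - c * t - h * a) = 0 := by linear_combination hsq
  exact (mul_eq_zero.mp this).resolve_left (by positivity)

end Placement

/-- Proposition 5 (optimality): `r*` of equation (24) is the unique global
maximizer of `g(r) = (u(r)/v(r))^(3/2)` over `[0, ∞)`. -/
theorem snr_large_ris_optimal_placement (rh ys A B : ℝ) (hrh : 0 < rh) (hys : 0 < ys) :
    let rstar := (-A ^ 2 + rh ^ 2 + B ^ 2 +
      Real.sqrt ((A ^ 2 - rh ^ 2 - B ^ 2) ^ 2 + 4 * rh ^ 2 * (ys ^ 2 + A ^ 2))) / (2 * rh)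
    ∀ r : ℝ, 0 ≤ r → r ≠ rstar →
      ((r ^ 2 + ys ^ 2 + A ^ 2) / ((rh - r) ^ 2 + ys ^ 2 + B ^ 2)) ^ ((3 : ℝ) / 2) <
      ((rstar ^ 2 + ys ^ 2 + A ^ 2) / ((rh - rstar) ^ 2 + ys ^ 2 + B ^ 2)) ^ ((3 : ℝ) / 2) := by
  intro rstar r _ hne
  have hc : rh ^ 2 + (ys ^ 2 + B ^ 2) - (ys ^ 2 + A ^ 2) = -A ^ 2 + rh ^ 2 + B ^ 2 := by ring
  obtain ⟨hroot, hlead⟩ := stationary_and_pos_of_eq_quadratic_formula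
    (c := -A ^ 2 + rh ^ 2 + B ^ 2) hrh (by positivity : 0 < ys ^ 2 + A ^ 2) (t := rstar)
    (by simp only [rstar]; ring_nf)
  rw [← hc] at hroot hlead
  have hlt := div_lt_div_of_stationary (by positivity : 0 < ys ^ 2 + B ^ 2) hroot hlead hne
  simp only [← add_assoc] at hlt
  exact rpow_lt_rpow (by positivity) hlt (by norm_num)
end
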